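/- Define F : ℝ → ℝ² by F(θ) = (θ - 2βcθ·D(θ), βθ² + c·D(θ)) with constants β > 0, c > 0 and D(θ) = 1/√(1+4β²θ²). If 2βc > 1, then the first component f₁(θ) = θ(1 - 2βc·D(θ)) is not injective on ℝ: f₁ is odd, f₁(0) = 0, f₁(θ) < 0 for small θ > 0, and f₁(θ) → +∞ as θ → +∞, so there exists θ* > 0 with f₁(θ*) = 0 = f₁(0), i.e., the map exhibits a fold (non-invertibility) in its first coordinate. -/

import Mathlib

/-!
Write `s(θ) = √(1 + 4β²θ²)`, so that `f₁(θ) = θ (1 - 2βc / s(θ))`. Since `s` increases from `1`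
on `[0, ∞)` and `2βc > 1`, the factor `1 - 2βc / s(θ)` is negative until `s(θ) = 2βc`, i.e. until
`θ* = √((2βc)² - 1) / (2β)`, where `f₁` vanishes a second time. For large `θ` the bound
`2βθ ≤ s(θ)` gives `f₁(θ) ≥ θ - c`.
-/

open Filter

namespace FoldMap

noncomputable def foldCoord (β c θ : ℝ) : ℝ :=
  θ * (1 - 2 * β * c * (1 / √(1 + 4 * β ^ 2 * θ ^ 2)))

noncomputable def foldRoot (β c : ℝ) : ℝ :=
  √((2 * β * c) ^ 2 - 1) / (2 * β)

variable {β c : ℝ}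

theorem foldCoord_neg (β c θ : ℝ) : foldCoord β c (-θ) = -foldCoord β c θ := by
  simp only [foldCoord, neg_sq]
  ring

theorem foldCoord_zero (β c : ℝ) : foldCoord β c 0 = 0 := by
  simp [foldCoord]

theorem foldCoord_neg_of_sqrt_lt {θ : ℝ} (hθ : 0 < θ)
    (hlt : √(1 + 4 * β ^ 2 * θ ^ 2) < 2 * β * c) : foldCoord β c θ < 0 := by
  have hs : 0 < √(1 + 4 * β ^ 2 * θ ^ 2) := Real.sqrt_pos.2 (by positivity)
  have : 1 < 2 * β * c * (1 / √(1 + 4 * β ^ 2 * θ ^ 2)) := by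
    rwa [mul_one_div, one_lt_div hs]
  exact mul_neg_of_pos_of_neg hθ (by linarith)

theorem foldRoot_pos (hβ : 0 < β) (h : 1 < 2 * β * c) : 0 < foldRoot β c :=
  div_pos (Real.sqrt_pos.2 (by nlinarith)) (by positivity)

theorem sqrt_one_add_sq_foldRoot (hβ : 0 < β) (h : 1 < 2 * β * c) :
    √(1 + 4 * β ^ 2 * foldRoot β c ^ 2) = 2 * β * c := by
  have hsq : √((2 * β * c) ^ 2 - 1) ^ 2 = (2 * β * c) ^ 2 - 1 := Real.sq_sqrt (by nlinarith)
  have harg : 1 + 4 * β ^ 2 * foldRoot β c ^ 2 = (2 * β * c) ^ 2 := by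
    rw [foldRoot, div_pow, hsq]
    field_simp
    ring
  rw [harg, Real.sqrt_sq (by linarith)]

theorem foldCoord_foldRoot (hβ : 0 < β) (h : 1 < 2 * β * c) :
    foldCoord β c (foldRoot β c) = 0 := by
  rw [foldCoord, sqrt_one_add_sq_foldRoot hβ h, mul_one_div, div_self (by linarith), sub_self,
    mul_zero]

theorem foldCoord_neg_of_lt_foldRoot (hβ : 0 < β) (h : 1 < 2 * β * c) {θ : ℝ} (hθ : 0 < θ)
    (hθr : θ < foldRoot β c) : foldCoord β c θ < 0 := by
  refine foldCoord_neg_of_sqrt_lt hθ ?_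
  rw [← sqrt_one_add_sq_foldRoot hβ h]
  apply Real.sqrt_lt_sqrt (by positivity)
  gcongr

theorem sub_le_foldCoord (hc : 0 ≤ c) (θ : ℝ) : θ - c ≤ foldCoord β c θ := by
  have hs : 0 < √(1 + 4 * β ^ 2 * θ ^ 2) := Real.sqrt_pos.2 (by positivity)
  have hlin : 2 * β * θ ≤ √(1 + 4 * β ^ 2 * θ ^ 2) :=
    (le_abs_self _).trans (Real.abs_le_sqrt (by nlinarith))
  have : 2 * β * c * (1 / √(1 + 4 * β ^ 2 * θ ^ 2)) * θ ≤ c := by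
    rw [mul_one_div, div_mul_eq_mul_div, div_le_iff₀ hs]
    nlinarith
  rw [foldCoord]
  linarith

theorem tendsto_foldCoord_atTop (hc : 0 ≤ c) : Tendsto (foldCoord β c) atTop atTop :=
  tendsto_atTop_mono (sub_le_foldCoord hc) (tendsto_atTop_add_const_right _ (-c) tendsto_id)

theorem not_injective_foldCoord (hβ : 0 < β) (h : 1 < 2 * β * c) :
    ¬ Function.Injective (foldCoord β c) := fun hinj =>
  (foldRoot_pos hβ h).ne' <| hinj <| by rw [foldCoord_foldRoot hβ h, foldCoord_zero]

end FoldMap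

open FoldMap

/-- For `F(θ) = (θ - 2βcθD(θ), βθ² + cD(θ))` with `2βc > 1`, the first component
`f₁(θ) = θ(1 - 2βc D(θ))` is odd, vanishes at `0`, is negative for small `θ > 0`,
tends to `+∞`, has a positive zero, and is not injective. -/
theorem stmt_11 (β c : ℝ) (hβ : 0 < β) (hc : 0 < c) (h : 1 < 2 * β * c) :
    let D : ℝ → ℝ := fun θ => 1 / Real.sqrt (1 + 4 * β ^ 2 * θ ^ 2)
    let f₁ : ℝ → ℝ := fun θ => θ * (1 - 2 * β * c * D θ)
    (∀ θ : ℝ, f₁ (-θ) = -f₁ θ) ∧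
    f₁ 0 = 0 ∧
    (∃ δ > (0 : ℝ), ∀ θ : ℝ, 0 < θ → θ < δ → f₁ θ < 0) ∧
    Tendsto f₁ atTop atTop ∧
    (∃ θstar > (0 : ℝ), f₁ θstar = 0) ∧
    ¬ Function.Injective f₁ :=
  ⟨foldCoord_neg β c, foldCoord_zero β c,
    ⟨foldRoot β c, foldRoot_pos hβ h, fun _ => foldCoord_neg_of_lt_foldRoot hβ h⟩,
    tendsto_foldCoord_atTop hc.le, ⟨foldRoot β c, foldRoot_pos hβ h, foldCoord_foldRoot hβ h⟩,
    not_injective_foldCoord hβ h⟩
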